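/- arXiv:1903.07483 — 4 statements merged into one kernel-verified Lean document; each statement's English description precedes it below -/
import Mathlib

section
/- Local version: the nonlinear (A)-condition on balls implies the linearized (A)-condition. Let X₁, Y₁, X₂, Y₂ be Banach spaces and r₁, r₁′, r₂, r₂′ ∈ (0,∞]. Let F : X₁(r₁) × Y₂(r₂′) → X₂(r₂) and G : X₁(r₁) × Y₂(r₂′) → Y₁(r₁′) be continuously Fréchet differentiable, and let α, α′, λ_u, β ≥ 0 with α·β < 1/2. Suppose the correspondence H ∼ (F,G) (with graph quantified over these ball domains) satisfies the (A)(α;α′,λ_u) condition, and Lip G(·,y) ≤ β for every y ∈ Y₂(r₂′). Then for every (x₁,y₂) ∈ X₁(r₁) × Y₂(r₂′): for all (ξ,η′) ∈ X₁ × Y₂, writing η = DG(x₁,y₂)(ξ,η′) and ξ′ = DF(x₁,y₂)(ξ,η′), the inequality ‖ξ‖ ≤ α·‖η‖ implies both ‖ξ′‖ ≤ α′·‖η′‖ and ‖η‖ ≤ λ_u·‖η′‖; moreover ‖D₁G(x₁,y₂)‖ ≤ β. -/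
/-!
Fix `p` and a direction `v = (ξ, η')`. Along the ray `t ↦ p + t • v`, `t → 0⁺`, the difference
quotients of `F` and `G` tend to `DF p v` and `DG p v`. If `v` lies strictly inside the cone
`‖ξ‖ < α ‖DG p v‖` (or `ξ = 0`), the points `p` and `p + t • v` eventually satisfy the hypothesis
of the nonlinear (A)-condition, and dividing its conclusions by `t` gives the linearized ones in
the limit. A direction on the boundary of the cone is the limit of `((1 - s) • ξ, η')`, `s → 0⁺`,
which lie strictly inside it because `‖D₁G‖ ≤ β` (the derivative of a `β`-Lipschitz map) and
`α β < 1`; the linearized conclusions are closed conditions.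
-/

open scoped ENNReal
open Filter Topology

/-- The (A)(α; α′, λᵤ) condition for the correspondence `H ∼ (F, G)` with graph over `S`. -/
def SatisfiesACondition {X₁ Y₁ X₂ Y₂ : Type*} [SeminormedAddCommGroup X₁]
    [SeminormedAddCommGroup Y₁] [SeminormedAddCommGroup X₂] [SeminormedAddCommGroup Y₂]
    (S : Set (X₁ × Y₂)) (F : X₁ × Y₂ → X₂) (G : X₁ × Y₂ → Y₁) (α α' lamu : ℝ) : Prop :=
  ∀ p ∈ S, ∀ q ∈ S, ‖p.1 - q.1‖ ≤ α * ‖G p - G q‖ →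
    ‖F p - F q‖ ≤ α' * ‖p.2 - q.2‖ ∧ ‖G p - G q‖ ≤ lamu * ‖p.2 - q.2‖

section Slope

variable {E F : Type*} [NormedAddCommGroup E] [NormedSpace ℝ E]
  [NormedAddCommGroup F] [NormedSpace ℝ F] {f : E → F} {f' : E →L[ℝ] F} {p : E}

theorem HasFDerivAt.tendsto_inv_mul_norm_sub (hf : HasFDerivAt f f' p) (v : E) :
    Tendsto (fun t : ℝ => t⁻¹ * ‖f (p + t • v) - f p‖) (𝓝[>] 0) (𝓝 ‖f' v‖) := by
  have hline : HasDerivAt (fun t : ℝ => p + t • v) v 0 := by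
    simpa using ((hasDerivAt_id (0 : ℝ)).smul_const v).const_add p
  have hcomp : HasDerivAt (fun t : ℝ => f (p + t • v)) (f' v) 0 :=
    hf.comp_hasDerivAt_of_eq 0 hline (by simp)
  refine ((hasDerivAt_iff_tendsto_slope.mp hcomp).norm.mono_left
    (nhdsWithin_mono 0 fun t ht => ne_of_gt ht)).congr' ?_
  filter_upwards [self_mem_nhdsWithin] with t (ht : 0 < t)
  simp [slope, norm_smul, ht.le]

theorem HasFDerivAt.norm_apply_le_of_eventually_le (hf : HasFDerivAt f f' p) (v : E) {C : ℝ}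
    (h : ∀ᶠ t in 𝓝[>] (0 : ℝ), ‖f (p + t • v) - f p‖ ≤ t * C) : ‖f' v‖ ≤ C := by
  refine le_of_tendsto (hf.tendsto_inv_mul_norm_sub v) ?_
  filter_upwards [h, self_mem_nhdsWithin] with t hle (ht : 0 < t)
  rw [inv_mul_le_iff₀ ht]
  exact hle

theorem norm_sub_add_smul (x w : E) {t : ℝ} (ht : 0 ≤ t) : ‖x - (x + t • w)‖ = t * ‖w‖ := by
  simp [norm_smul, abs_of_nonneg ht]

theorem eventually_add_smul_mem {s : Set E} (hs : s ∈ 𝓝 p) (v : E) :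
    ∀ᶠ t in 𝓝[>] (0 : ℝ), p + t • v ∈ s := by
  have hc : Tendsto (fun t : ℝ => p + t • v) (𝓝 0) (𝓝 p) :=
    (Continuous.tendsto' (by fun_prop) 0 p (by simp))
  exact (hc.mono_left nhdsWithin_le_nhds).eventually hs

end Slope

section Linearization

variable {X₁ Y₁ X₂ Y₂ : Type*}
  [NormedAddCommGroup X₁] [NormedSpace ℝ X₁] [NormedAddCommGroup Y₁] [NormedSpace ℝ Y₁]
  [NormedAddCommGroup X₂] [NormedSpace ℝ X₂] [NormedAddCommGroup Y₂] [NormedSpace ℝ Y₂]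
  {α α' lamu β : ℝ}

theorem HasFDerivAt.norm_comp_inl_le_of_lipschitz {G : X₁ × Y₂ → Y₁} {DG : X₁ × Y₂ →L[ℝ] Y₁}
    {p : X₁ × Y₂} (hG : HasFDerivAt G DG p) (hβ : 0 ≤ β)
    (hLip : ∀ᶠ x in 𝓝 p.1, ‖G (x, p.2) - G p‖ ≤ β * ‖x - p.1‖) :
    ‖DG.comp (ContinuousLinearMap.inl ℝ X₁ Y₂)‖ ≤ β :=
  (hG.comp p.1 (hasFDerivAt_prodMk_left p.1 p.2)).le_of_lip' hβ hLip

theorem norm_smul_lt_of_norm_le_mul (DG : X₁ × Y₂ →L[ℝ] Y₁)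
    (hDG : ‖DG.comp (ContinuousLinearMap.inl ℝ X₁ Y₂)‖ ≤ β) (hαβ : α * β < 1)
    {ξ : X₁} {η : Y₂} (hξ : ξ ≠ 0) (hv : ‖ξ‖ ≤ α * ‖DG (ξ, η)‖) {s : ℝ} (hs : 0 < s)
    (hs1 : s < 1) : ‖(1 - s) • ξ‖ < α * ‖DG ((1 - s) • ξ, η)‖ := by
  have hξpos : 0 < ‖ξ‖ := norm_pos_iff.mpr hξ
  have hαpos : 0 < α := by
    by_contra! h
    nlinarith [norm_nonneg (DG (ξ, η))]
  have hDGξ : ‖DG (ξ, 0)‖ ≤ β * ‖ξ‖ :=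
    ((DG.comp (ContinuousLinearMap.inl ℝ X₁ Y₂)).le_opNorm ξ).trans
      (mul_le_mul_of_nonneg_right hDG hξpos.le)
  have hsplit : DG ((1 - s) • ξ, η) = DG (ξ, η) - s • DG (ξ, 0) := by
    rw [← map_smul, ← map_sub]
    congr 1
    ext <;> simp [sub_smul]
  have hlow : ‖DG (ξ, η)‖ - s * (β * ‖ξ‖) ≤ ‖DG ((1 - s) • ξ, η)‖ := by
    calc ‖DG (ξ, η)‖ - s * (β * ‖ξ‖) ≤ ‖DG (ξ, η)‖ - ‖s • DG (ξ, 0)‖ := by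
          rw [norm_smul, Real.norm_of_nonneg hs.le]
          gcongr
      _ ≤ ‖DG ((1 - s) • ξ, η)‖ := hsplit ▸ norm_sub_norm_le _ _
  rw [norm_smul, Real.norm_of_nonneg (by linarith)]
  calc (1 - s) * ‖ξ‖ < α * (‖DG (ξ, η)‖ - s * (β * ‖ξ‖)) := by nlinarith [mul_pos hs hξpos]
    _ ≤ α * ‖DG ((1 - s) • ξ, η)‖ := mul_le_mul_of_nonneg_left hlow hαpos.le

theorem mem_of_norm_le_mul_of_strict {P : Set (X₁ × Y₂)} (hP : IsClosed P)
    (DG : X₁ × Y₂ →L[ℝ] Y₁) (hDG : ‖DG.comp (ContinuousLinearMap.inl ℝ X₁ Y₂)‖ ≤ β)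
    (hαβ : α * β < 1) (hstrict : ∀ v : X₁ × Y₂, (v.1 = 0 ∨ ‖v.1‖ < α * ‖DG v‖) → v ∈ P)
    {v : X₁ × Y₂} (hv : ‖v.1‖ ≤ α * ‖DG v‖) : v ∈ P := by
  obtain ⟨ξ, η⟩ := v
  by_cases hξ : ξ = 0
  · exact hstrict _ (Or.inl hξ)
  have hlim : Tendsto (fun s : ℝ => ((1 - s) • ξ, η)) (𝓝[>] 0) (𝓝 (ξ, η)) :=
    (Continuous.tendsto' (by fun_prop) 0 _ (by simp)).mono_left nhdsWithin_le_nhds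
  refine hP.mem_of_tendsto hlim ?_
  filter_upwards [Ioo_mem_nhdsGT (zero_lt_one' ℝ)] with s hs
  exact hstrict _ (Or.inr (norm_smul_lt_of_norm_le_mul DG hDG hαβ hξ hv hs.1 hs.2))

variable {S : Set (X₁ × Y₂)} {F : X₁ × Y₂ → X₂} {G : X₁ × Y₂ → Y₁}
  {DF : X₁ × Y₂ →L[ℝ] X₂} {DG : X₁ × Y₂ →L[ℝ] Y₁} {p : X₁ × Y₂}

theorem SatisfiesACondition.linearized_of_strict_cone (hA : SatisfiesACondition S F G α α' lamu)
    (hp : S ∈ 𝓝 p) (hF : HasFDerivAt F DF p) (hG : HasFDerivAt G DG p) (hα : 0 ≤ α)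
    {v : X₁ × Y₂} (hv : v.1 = 0 ∨ ‖v.1‖ < α * ‖DG v‖) :
    ‖DF v‖ ≤ α' * ‖v.2‖ ∧ ‖DG v‖ ≤ lamu * ‖v.2‖ := by
  have hcone : ∀ᶠ t in 𝓝[>] (0 : ℝ), t * ‖v.1‖ ≤ α * ‖G p - G (p + t • v)‖ := by
    rcases hv with h0 | hlt
    · filter_upwards with t
      simpa [h0] using mul_nonneg hα (norm_nonneg _)
    · filter_upwards [((hG.tendsto_inv_mul_norm_sub v).const_mul α).eventually
        (eventually_gt_nhds hlt), self_mem_nhdsWithin] with t hlt (ht : 0 < t)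
      rw [norm_sub_rev, ← le_inv_mul_iff₀ ht, ← mul_assoc, mul_comm t⁻¹, mul_assoc]
      exact hlt.le
  have hbounds : ∀ᶠ t in 𝓝[>] (0 : ℝ),
      ‖F p - F (p + t • v)‖ ≤ α' * (t * ‖v.2‖) ∧ ‖G p - G (p + t • v)‖ ≤ lamu * (t * ‖v.2‖) := by
    filter_upwards [eventually_add_smul_mem hp v, hcone, self_mem_nhdsWithin]
      with t hq hc (ht : 0 < t)
    have h := hA p (mem_of_mem_nhds hp) _ hq
      (by rwa [Prod.fst_add, Prod.smul_fst, norm_sub_add_smul _ _ ht.le])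
    rwa [Prod.snd_add, Prod.smul_snd, norm_sub_add_smul _ _ ht.le] at h
  constructor
  · refine hF.norm_apply_le_of_eventually_le v (hbounds.mono fun t h => ?_)
    rw [norm_sub_rev]; linarith [h.1]
  · refine hG.norm_apply_le_of_eventually_le v (hbounds.mono fun t h => ?_)
    rw [norm_sub_rev]; linarith [h.2]

theorem SatisfiesACondition.linearized (hA : SatisfiesACondition S F G α α' lamu)
    (hp : S ∈ 𝓝 p) (hF : HasFDerivAt F DF p) (hG : HasFDerivAt G DG p) (hα : 0 ≤ α)
    (hDG : ‖DG.comp (ContinuousLinearMap.inl ℝ X₁ Y₂)‖ ≤ β) (hαβ : α * β < 1)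
    {v : X₁ × Y₂} (hv : ‖v.1‖ ≤ α * ‖DG v‖) :
    ‖DF v‖ ≤ α' * ‖v.2‖ ∧ ‖DG v‖ ≤ lamu * ‖v.2‖ := by
  have hP : IsClosed ({v : X₁ × Y₂ | ‖DF v‖ ≤ α' * ‖v.2‖} ∩ {v | ‖DG v‖ ≤ lamu * ‖v.2‖}) :=
    (isClosed_le (by fun_prop) (by fun_prop)).inter (isClosed_le (by fun_prop) (by fun_prop))
  exact mem_of_norm_le_mul_of_strict hP DG hDG hαβ
    (fun _ hw => hA.linearized_of_strict_cone hp hF hG hα hw) hv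

end Linearization

theorem local_A_condition_implies_linearized_general
    {X₁ Y₁ X₂ Y₂ : Type*}
    [NormedAddCommGroup X₁] [NormedSpace ℝ X₁]
    [NormedAddCommGroup Y₁] [NormedSpace ℝ Y₁]
    [NormedAddCommGroup X₂] [NormedSpace ℝ X₂]
    [NormedAddCommGroup Y₂] [NormedSpace ℝ Y₂]
    (r₁ r₂' : ℝ≥0∞)
    (F : X₁ × Y₂ → X₂) (G : X₁ × Y₂ → Y₁)
    (S : Set (X₁ × Y₂))
    (hS : S = {p : X₁ × Y₂ | (‖p.1‖₊ : ℝ≥0∞) < r₁ ∧ (‖p.2‖₊ : ℝ≥0∞) < r₂'})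
    -- F, G are continuously Fréchet differentiable on the ball domain
    (hFC1 : ContDiffOn ℝ 1 F S) (hGC1 : ContDiffOn ℝ 1 G S)
    (α α' lamu β : ℝ)
    (hα : 0 ≤ α) (hβ : 0 ≤ β)
    (hαβ : α * β < 1 / 2)
    -- H satisfies the (A)(α; α′, λ_u) condition on the ball domain
    (hA : ∀ p ∈ S, ∀ q ∈ S,
      ‖p.1 - q.1‖ ≤ α * ‖G p - G q‖ →
        ‖F p - F q‖ ≤ α' * ‖p.2 - q.2‖ ∧ ‖G p - G q‖ ≤ lamu * ‖p.2 - q.2‖)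
    -- Lip G(·, y) ≤ β for every y in the ball
    (hβLip : ∀ y : Y₂, (‖y‖₊ : ℝ≥0∞) < r₂' → ∀ x x' : X₁,
      (‖x‖₊ : ℝ≥0∞) < r₁ → (‖x'‖₊ : ℝ≥0∞) < r₁ →
      ‖G (x, y) - G (x', y)‖ ≤ β * ‖x - x'‖) :
    ∀ p ∈ S,
      (∀ (ξ : X₁) (η' : Y₂),
        ‖ξ‖ ≤ α * ‖fderiv ℝ G p (ξ, η')‖ →
          ‖fderiv ℝ F p (ξ, η')‖ ≤ α' * ‖η'‖ ∧
            ‖fderiv ℝ G p (ξ, η')‖ ≤ lamu * ‖η'‖) ∧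
      ‖(fderiv ℝ G p).comp (ContinuousLinearMap.inl ℝ X₁ Y₂)‖ ≤ β := by
  subst hS
  intro p hp
  have hopen : IsOpen {q : X₁ × Y₂ | (‖q.1‖₊ : ℝ≥0∞) < r₁ ∧ (‖q.2‖₊ : ℝ≥0∞) < r₂'} :=
    (isOpen_lt (f := fun q : X₁ × Y₂ => (‖q.1‖₊ : ℝ≥0∞)) (by fun_prop) continuous_const).inter
      (isOpen_lt (f := fun q : X₁ × Y₂ => (‖q.2‖₊ : ℝ≥0∞)) (by fun_prop) continuous_const)
  have hS := hopen.mem_nhds hp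
  have hF := ((hFC1.differentiableOn one_ne_zero) p hp).differentiableAt hS |>.hasFDerivAt
  have hG := ((hGC1.differentiableOn one_ne_zero) p hp).differentiableAt hS |>.hasFDerivAt
  have hDG : ‖(fderiv ℝ G p).comp (ContinuousLinearMap.inl ℝ X₁ Y₂)‖ ≤ β := by
    refine hG.norm_comp_inl_le_of_lipschitz hβ ?_
    filter_upwards [(isOpen_lt (f := fun x : X₁ => (‖x‖₊ : ℝ≥0∞)) (by fun_prop)
      continuous_const).mem_nhds hp.1] with x hx
    exact hβLip p.2 hp.2 x p.1 hx hp.1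
  exact ⟨fun ξ η' h => SatisfiesACondition.linearized hA hS hF hG hα hDG (by linarith) h, hDG⟩

/-- Local version: the nonlinear (A)-condition on balls implies the linearized
(A)-condition. -/
theorem local_A_condition_implies_linearized
    {X₁ Y₁ X₂ Y₂ : Type*}
    [NormedAddCommGroup X₁] [NormedSpace ℝ X₁] [CompleteSpace X₁]
    [NormedAddCommGroup Y₁] [NormedSpace ℝ Y₁] [CompleteSpace Y₁]
    [NormedAddCommGroup X₂] [NormedSpace ℝ X₂] [CompleteSpace X₂]
    [NormedAddCommGroup Y₂] [NormedSpace ℝ Y₂] [CompleteSpace Y₂]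
    (r₁ r₁' r₂ r₂' : ℝ≥0∞) (hr₁ : 0 < r₁) (hr₁' : 0 < r₁') (hr₂ : 0 < r₂) (hr₂' : 0 < r₂')
    (F : X₁ × Y₂ → X₂) (G : X₁ × Y₂ → Y₁)
    (S : Set (X₁ × Y₂))
    (hS : S = {p : X₁ × Y₂ | (‖p.1‖₊ : ℝ≥0∞) < r₁ ∧ (‖p.2‖₊ : ℝ≥0∞) < r₂'})
    -- F, G are continuously Fréchet differentiable on the ball domain
    (hFC1 : ContDiffOn ℝ 1 F S) (hGC1 : ContDiffOn ℝ 1 G S)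
    -- F, G map the ball domain into the prescribed balls
    (hFmap : ∀ p ∈ S, (‖F p‖₊ : ℝ≥0∞) < r₂)
    (hGmap : ∀ p ∈ S, (‖G p‖₊ : ℝ≥0∞) < r₁')
    (α α' lamu β : ℝ)
    (hα : 0 ≤ α) (hα'0 : 0 ≤ α') (hlamu : 0 ≤ lamu) (hβ : 0 ≤ β)
    (hαβ : α * β < 1 / 2)
    -- H satisfies the (A)(α; α′, λ_u) condition on the ball domain
    (hA : ∀ p ∈ S, ∀ q ∈ S,
      ‖p.1 - q.1‖ ≤ α * ‖G p - G q‖ →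
        ‖F p - F q‖ ≤ α' * ‖p.2 - q.2‖ ∧ ‖G p - G q‖ ≤ lamu * ‖p.2 - q.2‖)
    -- Lip G(·, y) ≤ β for every y in the ball
    (hβLip : ∀ y : Y₂, (‖y‖₊ : ℝ≥0∞) < r₂' → ∀ x x' : X₁,
      (‖x‖₊ : ℝ≥0∞) < r₁ → (‖x'‖₊ : ℝ≥0∞) < r₁ →
      ‖G (x, y) - G (x', y)‖ ≤ β * ‖x - x'‖) :
    ∀ p ∈ S,
      (∀ (ξ : X₁) (η' : Y₂),
        ‖ξ‖ ≤ α * ‖fderiv ℝ G p (ξ, η')‖ →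
          ‖fderiv ℝ F p (ξ, η')‖ ≤ α' * ‖η'‖ ∧
            ‖fderiv ℝ G p (ξ, η')‖ ≤ lamu * ‖η'‖) ∧
      ‖(fderiv ℝ G p).comp (ContinuousLinearMap.inl ℝ X₁ Y₂)‖ ≤ β :=
  local_A_condition_implies_linearized_general r₁ r₂' F G S hS hFC1 hGC1 α α' lamu β hα hβ hαβ hA
    hβLip
end

section
/- Global invariant foliation for bundle maps: existence and uniqueness. Let M be a set, u : M → M a map, and for each m ∈ M let X_m and Y_m be complete metric spaces. Let H be a bundle map over u with generating bundle map (F,G), i.e. maps H_m : X_m × Y_m → X_{u(m)} × Y_{u(m)} such that for every (x₁,y₁) ∈ X_m × Y_m there is exactly one ((x₁,y₁),(x₂,y₂)) ∈ Graph H_m, and H_m(x₁,y₁) denotes that point (x₂,y₂). Assume H satisfies the (A′)(α,λ_u)(B)(β;β′,λ_s) condition, where α, λ_u, β, β′, λ_s : M → [0,∞) are bounded functions such that sup_{m∈M} α(m)·β′(u(m)) < 1, β′(u(m)) ≤ β(m) for all m, and sup_{m∈M} λ_s(m)·λ_u(m)/(1 − α(m)·β′(u(m))) < 1. Then there exists a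 unique family of maps f_{m,q} : X_m → Y_m, indexed by m ∈ M and q = (q_x, q_y) ∈ X_m × Y_m, such that for every m and q: (1) f_{m,q}(q_x) = q_y and Lip f_{m,q} ≤ β′(m); (2) H_m maps the graph of f_{m,q} into the graph of f_{u(m), H_m(q)}, i.e. for every x ∈ X_m, writing H_m(x, f_{m,q}(x)) = (x′, y′), one has y′ = f_{u(m), H_m(q)}(x′). -/
/-!
The leaf through `q` is sought as the graph of a `β' m`-Lipschitz map `f m q` with
`f m q q.1 = q.2`. Invariance says that `f m q` is the graph transform of `f (u m) (H m q)`: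
over `x`, the fixed point `y₂` of the contraction `y ↦ f (u m) (H m q) (F m x y)` (factor
`α m * β' (u m) < 1`) gives `f m q x = G m x y₂`. The cone condition (B) keeps the transform
`β'`-Lipschitz, and for the weighted distance `sup dist (f m q x) (g m q x) / dist x q.1`,
(A′) and (B) make it a contraction with factor `λ_s λ_u / (1 - α β')`. All families agree at
the base points, so any two lie at weighted distance at most `2 sup β'`, and the Banach
iteration converges to a unique fixed point.
-/

open Filter Topology

theorem exists_unique_isFixedPt_of_dist_le_mul {A : Type*} [MetricSpace A] [CompleteSpace A]
    [Nonempty A] {Φ : A → A} {c : ℝ} (hc : c < 1)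
    (hΦ : ∀ y y', dist (Φ y) (Φ y') ≤ c * dist y y') : ∃! y, Φ y = y :=
  have hΦc : ContractingWith c.toNNReal Φ :=
    ⟨Real.toNNReal_lt_one.2 hc, LipschitzWith.of_dist_le' hΦ⟩
  ⟨hΦc.fixedPoint Φ, hΦc.fixedPoint_isFixedPt, fun _ hy => hΦc.fixedPoint_unique hy⟩

theorem eq_of_forall_dist_le_mul_pow {A : Type*} [MetricSpace A] {a b : A} {C c : ℝ}
    (hc₀ : 0 ≤ c) (hc : c < 1) (h : ∀ n : ℕ, dist a b ≤ C * c ^ n) : a = b := by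
  have hlim : Tendsto (fun n : ℕ => C * c ^ n) atTop (𝓝 0) := by
    simpa using (tendsto_pow_atTop_nhds_zero_of_lt_one hc₀ hc).const_mul C
  exact dist_le_zero.1 (ge_of_tendsto' hlim h)

section WeightedContraction

variable {ι : Type*} {Z : ι → Type*} [∀ i, MetricSpace (Z i)]

def WeightedDistLE (w : ι → ℝ) (K : ℝ) (s t : ∀ i, Z i) : Prop :=
  ∀ i, dist (s i) (t i) ≤ K * w i

variable {w : ι → ℝ} {S : Set (∀ i, Z i)} {Γ : (∀ i, Z i) → ∀ i, Z i} {c K₀ : ℝ}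

theorem weightedDistLE_iterate (hΓS : Set.MapsTo Γ S S) (hc₀ : 0 ≤ c) (hK₀ : 0 ≤ K₀)
    (hΓ : ∀ s ∈ S, ∀ t ∈ S, ∀ K, 0 ≤ K → WeightedDistLE w K s t →
      WeightedDistLE w (c * K) (Γ s) (Γ t))
    {s t : ∀ i, Z i} (hs : s ∈ S) (ht : t ∈ S) (hst : WeightedDistLE w K₀ s t) (n : ℕ) :
    WeightedDistLE w (K₀ * c ^ n) (Γ^[n] s) (Γ^[n] t) := by
  induction n with
  | zero => simpa using hst
  | succ n ih =>
    rw [Function.iterate_succ_apply', Function.iterate_succ_apply', pow_succ', mul_left_comm]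
    exact hΓ _ (hΓS.iterate n hs) _ (hΓS.iterate n ht) _ (by positivity) ih

/-- Banach's fixed point theorem for the weighted sup-distance on a product of complete metric
spaces, phrased without ever forming that (possibly infinite) distance. -/
theorem exists_unique_fixed_of_weightedDistLE [∀ i, CompleteSpace (Z i)] (hS : IsClosed S)
    (hne : S.Nonempty) (hΓS : Set.MapsTo Γ S S) (hc₀ : 0 ≤ c) (hc : c < 1) (hK₀ : 0 ≤ K₀)
    (hdiam : ∀ s ∈ S, ∀ t ∈ S, WeightedDistLE w K₀ s t)
    (hΓ : ∀ s ∈ S, ∀ t ∈ S, ∀ K, 0 ≤ K → WeightedDistLE w K s t →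
      WeightedDistLE w (c * K) (Γ s) (Γ t)) :
    ∃! s, s ∈ S ∧ Γ s = s := by
  obtain ⟨s₀, hs₀⟩ := hne
  have hstep : ∀ i n, dist (Γ^[n] s₀ i) (Γ^[n + 1] s₀ i) ≤ K₀ * w i * c ^ n := fun i n => by
    rw [Function.iterate_succ_apply, mul_right_comm]
    exact weightedDistLE_iterate hΓS hc₀ hK₀ hΓ hs₀ (hΓS hs₀) (hdiam _ hs₀ _ (hΓS hs₀)) n i
  choose f hf using fun i =>
    cauchySeq_tendsto_of_complete (cauchySeq_of_le_geometric c _ hc (hstep i))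
  have hfS : f ∈ S := hS.mem_of_tendsto (tendsto_pi_nhds.2 hf)
    (Eventually.of_forall fun n => hΓS.iterate n hs₀)
  have htail : ∀ n, WeightedDistLE w (K₀ * c ^ n / (1 - c)) (Γ^[n] s₀) f := fun n i => by
    rw [div_mul_eq_mul_div, mul_right_comm]
    exact dist_le_of_le_geometric_of_tendsto c _ hc (hstep i) (hf i) n
  have hfix : Γ f = f := funext fun i => by
    refine eq_of_forall_dist_le_mul_pow hc₀ hc (C := 2 * K₀ * w i * c / (1 - c)) fun n => ?_
    have hK : 0 ≤ K₀ * c ^ n / (1 - c) := div_nonneg (by positivity) (sub_nonneg.2 hc.le)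
    have hnext := htail (n + 1) i
    rw [Function.iterate_succ_apply'] at hnext
    calc dist (Γ f i) (f i) ≤ dist (Γ f i) (Γ (Γ^[n] s₀) i) + dist (Γ (Γ^[n] s₀) i) (f i) :=
          dist_triangle _ _ _
      _ ≤ c * (K₀ * c ^ n / (1 - c)) * w i + K₀ * c ^ (n + 1) / (1 - c) * w i := by
          rw [dist_comm]
          exact add_le_add (hΓ _ (hΓS.iterate n hs₀) _ hfS _ hK (htail n) i) hnext
      _ = 2 * K₀ * w i * c / (1 - c) * c ^ n := by ring
  refine ⟨f, ⟨hfS, hfix⟩, fun t ⟨htS, htfix⟩ => funext fun i =>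
    eq_of_forall_dist_le_mul_pow hc₀ hc (C := K₀ * w i) fun n => ?_⟩
  have h := weightedDistLE_iterate hΓS hc₀ hK₀ hΓ htS hfS (hdiam _ htS _ hfS) n i
  rwa [Function.iterate_fixed htfix, Function.iterate_fixed hfix, mul_right_comm] at h

end WeightedContraction

section BundleMap

variable {M : Type*} {u : M → M} {X Y : M → Type*}
  {F : ∀ m, X m → Y (u m) → X (u m)} {G : ∀ m, X m → Y (u m) → Y m}
  {H : ∀ m, X m × Y m → X (u m) × Y (u m)}

structure IsGeneratedBy (H : ∀ m, X m × Y m → X (u m) × Y (u m))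
    (F : ∀ m, X m → Y (u m) → X (u m)) (G : ∀ m, X m → Y (u m) → Y m) : Prop where
  mem_graph : ∀ m (p : X m × Y m), p.2 = G m p.1 (H m p).2 ∧ (H m p).1 = F m p.1 (H m p).2
  eq_of_mem_graph : ∀ m (p : X m × Y m) (q : X (u m) × Y (u m)),
    p.2 = G m p.1 q.2 → q.1 = F m p.1 q.2 → q = H m p

theorem IsGeneratedBy.apply_mk_G (hFGH : IsGeneratedBy H F G) (m : M) (x : X m)
    (y : Y (u m)) : H m (x, G m x y) = (F m x y, y) :=
  (hFGH.eq_of_mem_graph m _ _ rfl rfl).symm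

variable [∀ m, MetricSpace (X m)] [∀ m, MetricSpace (Y m)]

/-- The (A′)(α, λ_u)(B)(β; β′, λ_s) condition on the generating bundle map `(F, G)`. -/
structure ABCondition (F : ∀ m, X m → Y (u m) → X (u m)) (G : ∀ m, X m → Y (u m) → Y m)
    (α lamu β β' lams : M → ℝ) : Prop where
  lip_F : ∀ m (x : X m) (y y' : Y (u m)), dist (F m x y) (F m x y') ≤ α m * dist y y'
  lip_G : ∀ m (x : X m) (y y' : Y (u m)), dist (G m x y) (G m x y') ≤ lamu m * dist y y'
  cone : ∀ m (x₁ x₁' : X m) (y₂ y₂' : Y (u m)),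
    dist y₂ y₂' ≤ β m * dist (F m x₁ y₂) (F m x₁' y₂') →
      dist (G m x₁ y₂) (G m x₁' y₂') ≤ β' m * dist x₁ x₁' ∧
        dist (F m x₁ y₂) (F m x₁' y₂') ≤ lams m * dist x₁ x₁'

/-- A family of maps `f m q : X m → Y m`, indexed by the base point `m` and the point `q` of the
fibre its graph passes through, stored as a single section over the triples `⟨m, q, x⟩`. -/
abbrev LeafSection (X Y : M → Type*) := ∀ i : Σ m, (X m × Y m) × X m, Y i.1

variable (X Y) in
def leafFamilies (β' : M → ℝ) : Set (LeafSection X Y) :=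
  {s | ∀ m (q : X m × Y m), s ⟨m, q, q.1⟩ = q.2 ∧
    ∀ a b : X m, dist (s ⟨m, q, a⟩) (s ⟨m, q, b⟩) ≤ β' m * dist a b}

variable {α lamu β β' lams : M → ℝ}
  {s t : LeafSection X Y} {m : M} {q : X m × Y m}

variable (F H) in
open Classical in
/-- The fixed point `y` of `y ↦ s ⟨u m, H m q, F m x y⟩`: the fibre graph of `H m` over `x` meets
the graph of `s` over `H m q` at height `y`. -/
noncomputable def leafY (s : LeafSection X Y) (m : M) (q : X m × Y m) (x : X m) : Y (u m) :=
  if h : ∃ y, s ⟨u m, H m q, F m x y⟩ = y then h.choose else (H m q).2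

variable (F G H) in
/-- The graph transform: the leaf through `q` is the preimage under `H m` of the leaf through
`H m q`. -/
noncomputable def graphTransform (s : LeafSection X Y) : LeafSection X Y :=
  fun i => G i.1 i.2.2 (leafY F H s i.1 i.2.1 i.2.2)

theorem const_mem_leafFamilies (hβ' : ∀ m, 0 ≤ β' m) :
    (fun i => i.2.1.2 : LeafSection X Y) ∈ leafFamilies X Y β' :=
  fun m _ => ⟨rfl, fun a b => by simpa using mul_nonneg (hβ' m) (dist_nonneg (x := a) (y := b))⟩

theorem isClosed_leafFamilies : IsClosed (leafFamilies X Y β') := by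
  simp only [leafFamilies, Set.ofPred_forall, Set.ofPred_and]
  refine isClosed_iInter fun m => isClosed_iInter fun q => .inter ?_ ?_
  · exact isClosed_eq (continuous_apply _) continuous_const
  · exact isClosed_iInter fun a => isClosed_iInter fun b =>
      isClosed_le (by fun_prop) continuous_const

theorem weightedDistLE_of_mem_leafFamilies {B : ℝ} (hB : ∀ m, β' m ≤ B)
    (hs : s ∈ leafFamilies X Y β') (ht : t ∈ leafFamilies X Y β') :
    WeightedDistLE (fun i => dist i.2.2 i.2.1.1) (2 * B) s t := by
  rintro ⟨m, q, x⟩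
  calc dist (s ⟨m, q, x⟩) (t ⟨m, q, x⟩)
      ≤ dist (s ⟨m, q, x⟩) (s ⟨m, q, q.1⟩) + dist (t ⟨m, q, q.1⟩) (t ⟨m, q, x⟩) := by
        rw [(hs m q).1, (ht m q).1]
        exact dist_triangle _ _ _
    _ ≤ β' m * dist x q.1 + β' m * dist q.1 x := add_le_add ((hs m q).2 _ _) ((ht m q).2 _ _)
    _ ≤ 2 * B * dist x q.1 := by
        rw [dist_comm q.1 x]
        nlinarith [hB m, dist_nonneg (x := x) (y := q.1)]

variable [∀ m, CompleteSpace (Y m)]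

theorem leafY_eq_iff (hAB : ABCondition F G α lamu β β' lams) (hβ' : ∀ m, 0 ≤ β' m)
    (hgap : α m * β' (u m) < 1) (hs : s ∈ leafFamilies X Y β') (x : X m) {y : Y (u m)} :
    s ⟨u m, H m q, F m x y⟩ = y ↔ y = leafY F H s m q x := by
  have : Nonempty (Y (u m)) := ⟨(H m q).2⟩
  have hfix : ∃! y, s ⟨u m, H m q, F m x y⟩ = y :=
    exists_unique_isFixedPt_of_dist_le_mul hgap fun y y' =>
      calc dist (s ⟨u m, H m q, F m x y⟩) (s ⟨u m, H m q, F m x y'⟩)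
          ≤ β' (u m) * dist (F m x y) (F m x y') := (hs _ _).2 _ _
        _ ≤ β' (u m) * (α m * dist y y') := by gcongr; exacts [hβ' _, hAB.lip_F m x y y']
        _ = α m * β' (u m) * dist y y' := by ring
  have hspec : s ⟨u m, H m q, F m x (leafY F H s m q x)⟩ = leafY F H s m q x := by
    rw [leafY, dif_pos hfix.exists]
    exact hfix.exists.choose_spec
  exact ⟨fun hy => hfix.unique hy hspec, fun hy => hy ▸ hspec⟩

theorem leafY_spec (hAB : ABCondition F G α lamu β β' lams) (hβ' : ∀ m, 0 ≤ β' m)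
    (hgap : α m * β' (u m) < 1) (hs : s ∈ leafFamilies X Y β') (x : X m) :
    s ⟨u m, H m q, F m x (leafY F H s m q x)⟩ = leafY F H s m q x :=
  (leafY_eq_iff hAB hβ' hgap hs x).2 rfl

theorem leafY_base
    (hFGH : IsGeneratedBy H F G) (hAB : ABCondition F G α lamu β β' lams) (hβ' : ∀ m, 0 ≤ β' m)
    (hgap : α m * β' (u m) < 1) (hs : s ∈ leafFamilies X Y β') :
    leafY F H s m q q.1 = (H m q).2 :=
  ((leafY_eq_iff hAB hβ' hgap hs q.1).1 (by rw [← (hFGH.mem_graph m q).2]; exact (hs _ _).1)).symm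

theorem dist_leafY_le (hAB : ABCondition F G α lamu β β' lams) (hβ' : ∀ m, 0 ≤ β' m)
    (hgap : α m * β' (u m) < 1) (hββ' : β' (u m) ≤ β m) (hs : s ∈ leafFamilies X Y β')
    (a b : X m) :
    dist (leafY F H s m q a) (leafY F H s m q b) ≤
      β m * dist (F m a (leafY F H s m q a)) (F m b (leafY F H s m q b)) := by
  calc dist (leafY F H s m q a) (leafY F H s m q b)
      = dist (s ⟨u m, H m q, F m a (leafY F H s m q a)⟩)
          (s ⟨u m, H m q, F m b (leafY F H s m q b)⟩) := by
          rw [leafY_spec hAB hβ' hgap hs, leafY_spec hAB hβ' hgap hs]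
    _ ≤ β' (u m) * dist (F m a (leafY F H s m q a)) (F m b (leafY F H s m q b)) :=
        (hs _ _).2 _ _
    _ ≤ β m * dist (F m a (leafY F H s m q a)) (F m b (leafY F H s m q b)) := by gcongr

theorem graphTransform_mem
    (hFGH : IsGeneratedBy H F G) (hAB : ABCondition F G α lamu β β' lams) (hβ' : ∀ m, 0 ≤ β' m)
    (hgap : ∀ m, α m * β' (u m) < 1) (hββ' : ∀ m, β' (u m) ≤ β m)
    (hs : s ∈ leafFamilies X Y β') : graphTransform F G H s ∈ leafFamilies X Y β' := by
  refine fun m q => ⟨?_, fun a b => (hAB.cone m a b _ _ ?_).1⟩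
  · show G m q.1 (leafY F H s m q q.1) = q.2
    rw [leafY_base hFGH hAB hβ' (hgap m) hs]
    exact (hFGH.mem_graph m q).1.symm
  · exact dist_leafY_le hAB hβ' (hgap m) (hββ' m) hs a b

theorem dist_leafY_leafY_le
    (hFGH : IsGeneratedBy H F G) (hAB : ABCondition F G α lamu β β' lams) (hβ' : ∀ m, 0 ≤ β' m)
    (hgap : α m * β' (u m) < 1) (hββ' : β' (u m) ≤ β m)
    (hs : s ∈ leafFamilies X Y β') (ht : t ∈ leafFamilies X Y β') {K : ℝ} (hK : 0 ≤ K)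
    (hst : WeightedDistLE (fun i => dist i.2.2 i.2.1.1) K s t) (x : X m) :
    dist (leafY F H s m q x) (leafY F H t m q x) ≤
      K * (lams m * dist x q.1) / (1 - α m * β' (u m)) := by
  set ys := leafY F H s m q x
  set yt := leafY F H t m q x
  have hFt : dist (F m x yt) (H m q).1 ≤ lams m * dist x q.1 := by
    have hcone := dist_leafY_le (H := H) (q := q) hAB hβ' hgap hββ' ht x q.1
    have h := (hAB.cone m x q.1 _ _ hcone).2
    rwa [leafY_base hFGH hAB hβ' hgap ht, ← (hFGH.mem_graph m q).2] at h
  have hrec : dist ys yt ≤ α m * β' (u m) * dist ys yt + K * (lams m * dist x q.1) :=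
    calc dist ys yt = dist (s ⟨u m, H m q, F m x ys⟩) (t ⟨u m, H m q, F m x yt⟩) := by
          rw [leafY_spec hAB hβ' hgap hs, leafY_spec hAB hβ' hgap ht]
      _ ≤ dist (s ⟨u m, H m q, F m x ys⟩) (s ⟨u m, H m q, F m x yt⟩)
          + dist (s ⟨u m, H m q, F m x yt⟩) (t ⟨u m, H m q, F m x yt⟩) := dist_triangle _ _ _
      _ ≤ β' (u m) * dist (F m x ys) (F m x yt) + K * dist (F m x yt) (H m q).1 :=
          add_le_add ((hs _ _).2 _ _) (hst ⟨u m, H m q, F m x yt⟩)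
      _ ≤ β' (u m) * (α m * dist ys yt) + K * (lams m * dist x q.1) := by
          gcongr
          exacts [hβ' _, hAB.lip_F m x ys yt]
      _ = α m * β' (u m) * dist ys yt + K * (lams m * dist x q.1) := by ring
  rw [le_div_iff₀ (sub_pos.2 hgap)]
  linarith

theorem weightedDistLE_graphTransform
    (hFGH : IsGeneratedBy H F G) (hAB : ABCondition F G α lamu β β' lams) (hlamu : ∀ m, 0 ≤ lamu m) (hβ' : ∀ m, 0 ≤ β' m)
    (hgap : ∀ m, α m * β' (u m) < 1) (hββ' : ∀ m, β' (u m) ≤ β m) {c : ℝ}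
    (hspec : ∀ m, lams m * lamu m / (1 - α m * β' (u m)) ≤ c)
    (hs : s ∈ leafFamilies X Y β') (ht : t ∈ leafFamilies X Y β') {K : ℝ} (hK : 0 ≤ K)
    (hst : WeightedDistLE (fun i => dist i.2.2 i.2.1.1) K s t) :
    WeightedDistLE (fun i => dist i.2.2 i.2.1.1) (c * K)
      (graphTransform F G H s) (graphTransform F G H t) := by
  rintro ⟨m, q, x⟩
  calc dist (G m x (leafY F H s m q x)) (G m x (leafY F H t m q x))
      ≤ lamu m * dist (leafY F H s m q x) (leafY F H t m q x) := hAB.lip_G m x _ _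
    _ ≤ lamu m * (K * (lams m * dist x q.1) / (1 - α m * β' (u m))) := by
        gcongr
        exacts [hlamu m, dist_leafY_leafY_le hFGH hAB hβ' (hgap m) (hββ' m) hs ht hK hst x]
    _ = lams m * lamu m / (1 - α m * β' (u m)) * (K * dist x q.1) := by ring
    _ ≤ c * (K * dist x q.1) := by gcongr; exact hspec m
    _ = c * K * dist x q.1 := by ring

theorem graphTransform_eq_self_iff
    (hFGH : IsGeneratedBy H F G) (hAB : ABCondition F G α lamu β β' lams) (hβ' : ∀ m, 0 ≤ β' m)
    (hgap : ∀ m, α m * β' (u m) < 1) (hs : s ∈ leafFamilies X Y β') :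
    graphTransform F G H s = s ↔ ∀ m (q : X m × Y m) (x : X m),
      (H m (x, s ⟨m, q, x⟩)).2 = s ⟨u m, H m q, (H m (x, s ⟨m, q, x⟩)).1⟩ := by
  constructor
  · intro hfix m q x
    have hx : s ⟨m, q, x⟩ = G m x (leafY F H s m q x) := (congrFun hfix ⟨m, q, x⟩).symm
    rw [hx, hFGH.apply_mk_G]
    exact (leafY_spec hAB hβ' (hgap m) hs x).symm
  · intro hinv
    funext ⟨m, q, x⟩
    obtain ⟨hG, hF⟩ := hFGH.mem_graph m (x, s ⟨m, q, x⟩)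
    have hy : (H m (x, s ⟨m, q, x⟩)).2 = leafY F H s m q x :=
      (leafY_eq_iff hAB hβ' (hgap m) hs x).1 (by rw [← hF]; exact (hinv m q x).symm)
    rw [hy] at hG
    exact hG.symm

end BundleMap

theorem invariant_foliation_bundle_maps_general
    {M : Type*} (u : M → M) (X Y : M → Type*)
    [∀ m, MetricSpace (X m)]
    [∀ m, MetricSpace (Y m)] [∀ m, CompleteSpace (Y m)]
    (F : ∀ m, X m → Y (u m) → X (u m)) (G : ∀ m, X m → Y (u m) → Y m)
    -- H is a bundle map over u whose fiber graphs are generated by (F, G)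
    (H : ∀ m, X m × Y m → X (u m) × Y (u m))
    (hH : ∀ m (p : X m × Y m),
      p.2 = G m p.1 (H m p).2 ∧ (H m p).1 = F m p.1 (H m p).2)
    (hHuniq : ∀ m (p : X m × Y m) (q : X (u m) × Y (u m)),
      p.2 = G m p.1 q.2 → q.1 = F m p.1 q.2 → q = H m p)
    (α lamu β β' lams : M → ℝ)
    (hlamu : ∀ m, 0 ≤ lamu m)
    (hβ'0 : ∀ m, 0 ≤ β' m)
    -- the functions are bounded
    (hbdd : ∃ C : ℝ, ∀ m, α m ≤ C ∧ lamu m ≤ C ∧ β m ≤ C ∧ β' m ≤ C ∧ lams m ≤ C)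
    -- (A′)(α, λ_u) condition
    (hA'F : ∀ m (x : X m) (y y' : Y (u m)),
      dist (F m x y) (F m x y') ≤ α m * dist y y')
    (hA'G : ∀ m (x : X m) (y y' : Y (u m)),
      dist (G m x y) (G m x y') ≤ lamu m * dist y y')
    -- (B)(β; β′, λ_s) condition
    (hB : ∀ m (x₁ x₁' : X m) (y₂ y₂' : Y (u m)),
      dist y₂ y₂' ≤ β m * dist (F m x₁ y₂) (F m x₁' y₂') →
        dist (G m x₁ y₂) (G m x₁' y₂') ≤ β' m * dist x₁ x₁' ∧
          dist (F m x₁ y₂) (F m x₁' y₂') ≤ lams m * dist x₁ x₁')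
    (hangle : ∃ c : ℝ, c < 1 ∧ ∀ m, α m * β' (u m) ≤ c)
    (hββ' : ∀ m, β' (u m) ≤ β m)
    (hspec : ∃ c : ℝ, c < 1 ∧ ∀ m,
      lams m * lamu m / (1 - α m * β' (u m)) ≤ c) :
    ∃ f : ∀ m, X m × Y m → X m → Y m,
      (∀ m (q : X m × Y m),
        f m q q.1 = q.2 ∧
        (∀ a b : X m, dist (f m q a) (f m q b) ≤ β' m * dist a b) ∧
        ∀ x : X m,
          (H m (x, f m q x)).2 = f (u m) (H m q) ((H m (x, f m q x)).1)) ∧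
      ∀ f' : ∀ m, X m × Y m → X m → Y m,
        (∀ m (q : X m × Y m),
          f' m q q.1 = q.2 ∧
          (∀ a b : X m, dist (f' m q a) (f' m q b) ≤ β' m * dist a b) ∧
          ∀ x : X m,
            (H m (x, f' m q x)).2 = f' (u m) (H m q) ((H m (x, f' m q x)).1)) →
        ∀ m (q : X m × Y m), f' m q = f m q := by
  obtain ⟨C, hC⟩ := hbdd
  obtain ⟨c₁, hc₁, hαβ'⟩ := hangle
  obtain ⟨c₂, hc₂, hc₂spec⟩ := hspec
  have hFGH : IsGeneratedBy H F G := ⟨hH, hHuniq⟩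
  have hAB : ABCondition F G α lamu β β' lams := ⟨hA'F, hA'G, hB⟩
  have hgap : ∀ m, α m * β' (u m) < 1 := fun m => (hαβ' m).trans_lt hc₁
  obtain ⟨s, ⟨hsS, hsfix⟩, hsuniq⟩ := exists_unique_fixed_of_weightedDistLE
    isClosed_leafFamilies ⟨_, const_mem_leafFamilies hβ'0⟩
    (fun _ hs => graphTransform_mem hFGH hAB hβ'0 hgap hββ' hs) (le_max_right c₂ 0)
    (max_lt hc₂ one_pos) (by positivity : (0 : ℝ) ≤ 2 * max C 0)
    (fun _ hs _ ht => weightedDistLE_of_mem_leafFamilies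
      (fun m => (hC m).2.2.2.1.trans (le_max_left C 0)) hs ht)
    (fun _ hs _ ht _ hK hst => weightedDistLE_graphTransform hFGH hAB hlamu hβ'0 hgap hββ'
      (fun m => (hc₂spec m).trans (le_max_left c₂ 0)) hs ht hK hst)
  have hsinv := (graphTransform_eq_self_iff hFGH hAB hβ'0 hgap hsS).1 hsfix
  refine ⟨fun m q x => s ⟨m, q, x⟩, fun m q => ⟨(hsS m q).1, (hsS m q).2, hsinv m q⟩, ?_⟩
  intro f' hf' m q
  have hf'S : (fun i => f' i.1 i.2.1 i.2.2 : LeafSection X Y) ∈ leafFamilies X Y β' :=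
    fun m q => ⟨(hf' m q).1, (hf' m q).2.1⟩
  have hf'fix := (graphTransform_eq_self_iff hFGH hAB hβ'0 hgap hf'S).2
    fun m q => (hf' m q).2.2
  funext x
  exact congrFun (hsuniq _ ⟨hf'S, hf'fix⟩) ⟨m, q, x⟩

/-- Global invariant foliation for bundle maps: existence and uniqueness. -/
theorem invariant_foliation_bundle_maps
    {M : Type*} (u : M → M) (X Y : M → Type*)
    [∀ m, MetricSpace (X m)] [∀ m, CompleteSpace (X m)]
    [∀ m, MetricSpace (Y m)] [∀ m, CompleteSpace (Y m)]
    (F : ∀ m, X m → Y (u m) → X (u m)) (G : ∀ m, X m → Y (u m) → Y m)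
    -- H is a bundle map over u whose fiber graphs are generated by (F, G)
    (H : ∀ m, X m × Y m → X (u m) × Y (u m))
    (hH : ∀ m (p : X m × Y m),
      p.2 = G m p.1 (H m p).2 ∧ (H m p).1 = F m p.1 (H m p).2)
    (hHuniq : ∀ m (p : X m × Y m) (q : X (u m) × Y (u m)),
      p.2 = G m p.1 q.2 → q.1 = F m p.1 q.2 → q = H m p)
    (α lamu β β' lams : M → ℝ)
    (hα : ∀ m, 0 ≤ α m) (hlamu : ∀ m, 0 ≤ lamu m) (hβ : ∀ m, 0 ≤ β m)
    (hβ'0 : ∀ m, 0 ≤ β' m) (hlams : ∀ m, 0 ≤ lams m)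
    -- the functions are bounded
    (hbdd : ∃ C : ℝ, ∀ m, α m ≤ C ∧ lamu m ≤ C ∧ β m ≤ C ∧ β' m ≤ C ∧ lams m ≤ C)
    -- (A′)(α, λ_u) condition
    (hA'F : ∀ m (x : X m) (y y' : Y (u m)),
      dist (F m x y) (F m x y') ≤ α m * dist y y')
    (hA'G : ∀ m (x : X m) (y y' : Y (u m)),
      dist (G m x y) (G m x y') ≤ lamu m * dist y y')
    -- (B)(β; β′, λ_s) condition
    (hB : ∀ m (x₁ x₁' : X m) (y₂ y₂' : Y (u m)),
      dist y₂ y₂' ≤ β m * dist (F m x₁ y₂) (F m x₁' y₂') →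
        dist (G m x₁ y₂) (G m x₁' y₂') ≤ β' m * dist x₁ x₁' ∧
          dist (F m x₁ y₂) (F m x₁' y₂') ≤ lams m * dist x₁ x₁')
    (hangle : ∃ c : ℝ, c < 1 ∧ ∀ m, α m * β' (u m) ≤ c)
    (hββ' : ∀ m, β' (u m) ≤ β m)
    (hspec : ∃ c : ℝ, c < 1 ∧ ∀ m,
      lams m * lamu m / (1 - α m * β' (u m)) ≤ c) :
    ∃ f : ∀ m, X m × Y m → X m → Y m,
      (∀ m (q : X m × Y m),
        f m q q.1 = q.2 ∧
        (∀ a b : X m, dist (f m q a) (f m q b) ≤ β' m * dist a b) ∧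
        ∀ x : X m,
          (H m (x, f m q x)).2 = f (u m) (H m q) ((H m (x, f m q x)).1)) ∧
      ∀ f' : ∀ m, X m × Y m → X m → Y m,
        (∀ m (q : X m × Y m),
          f' m q q.1 = q.2 ∧
          (∀ a b : X m, dist (f' m q a) (f' m q b) ≤ β' m * dist a b) ∧
          ∀ x : X m,
            (H m (x, f' m q x)).2 = f' (u m) (H m q) ((H m (x, f' m q x)).1)) →
        ∀ m (q : X m × Y m), f' m q = f m q :=
  invariant_foliation_bundle_maps_general u X Y F G H hH hHuniq α lamu β β' lams hlamu hβ'0 hbdd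
    hA'F hA'G hB hangle hββ' hspec
end

section
/- Key iteration argument for Hölder/Lipschitz regularity (bounded case, Lipschitz exponent). Let M̄ be a set and w : M̄ → M̄. For each m ∈ M̄ let X̄_m, Ȳ_m, Ŷ_m be metric spaces with distinguished base points ȷ(m) ∈ X̄_m, ı(m) ∈ Ȳ_m, ı₀(m) ∈ Ŷ_m; write |x| = d(x, ȷ(m)) for x ∈ X̄_m, |y| = d(y, ı(m)) for y ∈ Ȳ_m, and |ŷ| = d(ŷ, ı₀(m)) for ŷ ∈ Ŷ_m. Let u_m : X̄_m → X̄_{w(m)}, v_m : X̄_m × Ȳ_m → Ȳ_{w(m)} and g_m : X̄_m × Ȳ_m → Ŷ_{w(m)} be families of maps, μ, κ, θ : M̄ → [0,∞) bounded functions, C₁, C₂ ≥ 0 constants and γ₁, γ₂, ζ₁, ζ₂ ∈ [0,1] exponents. Assume: (i) Lip u_m ≤ μ(m) and u_m(ȷ(m)) = ȷ(w(m)) for every m; (ii) |v_m(x,y)| ≤ κ(m)·|y| for all m and (x,y) ∈ X̄_m × Ȳ_m; (iii) for all m ∈ M̄, x₁, x₂ ∈ X̄_m and y ∈ Ȳ_m: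 d(g_m(x₁,y), g_m(x₂,y)) ≤ C₁·d(x₁,x₂)^{γ₁}·|y|^{ζ₁} + C₂·d(x₁,x₂)^{γ₂}·|y|^{ζ₂} + θ(m)·d(g_{w(m)}(u_m(x₁), v_m(x₁,y)), g_{w(m)}(u_m(x₂), v_m(x₁,y))); (iv) g is bounded: sup_{m∈M̄} sup_{(x,y)∈X̄_m×Ȳ_m} |g_m(x,y)| < ∞; (v) sup_m θ(m) < 1, sup_m κ(m)^{ζ₁}·μ(m)^{γ₁}·θ(m) < 1, and sup_m κ(m)^{ζ₂}·μ(m)^{γ₂}·θ(m) < 1. Then there is a constant C ≥ 0 such that for all m ∈ M̄, x₁, x₂ ∈ X̄_m and y ∈ Ȳ_m: d(g_m(x₁,y), g_m(x₂,y)) ≤ C·C₁·d(x₁,x₂)^{γ₁}·|y|^{ζ₁} + C·C₂·d(x₁,x₂)^{γ₂}·|y|^{ζ₂}. -/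
/-!
Unrolling the recursive inequality `n` times along the orbit `m, w m, w² m, …` bounds the
distance by `(1 - c)⁻¹` times the Hölder terms plus `cⁿ` times a bound for `g`: each step
multiplies the Hölder terms by at most `κ^ζ μ^γ θ ≤ c` and the remainder by `θ ≤ c`.
Letting `n → ∞` kills the remainder, which is where boundedness of `g` enters.
-/

open Filter Topology

theorem le_inv_one_sub_mul_of_le_add_mul_comp {T : Type*} (σ : T → T) (f E θ : T → ℝ)
    {c : ℝ} (hc : c < 1) (hθ0 : ∀ t, 0 ≤ θ t) (hθc : ∀ t, θ t ≤ c)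
    (hE0 : ∀ t, 0 ≤ E t) (hf : BddAbove (Set.range f)) (hrec : ∀ t, f t ≤ E t + θ t * f (σ t))
    (hE : ∀ t, θ t * E (σ t) ≤ c * E t) (t : T) :
    f t ≤ (1 - c)⁻¹ * E t := by
  obtain ⟨B, hB⟩ := hf
  have hc0 : 0 ≤ c := (hθ0 t).trans (hθc t)
  set A := (1 - c)⁻¹
  have hA : 0 ≤ A := inv_nonneg.2 (sub_nonneg.2 hc.le)
  have hA_fix : 1 + A * c = A := by
    have : A * (1 - c) = 1 := inv_mul_cancel₀ (sub_pos.2 hc).ne'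
    linarith
  have hB0 : ∀ t, f t ≤ max B 0 := fun t => (hB ⟨t, rfl⟩).trans (le_max_left _ _)
  have hiter : ∀ n : ℕ, ∀ t, f t ≤ A * E t + c ^ n * max B 0 := by
    intro n
    induction n with
    | zero => intro t; simpa using (hB0 t).trans (le_add_of_nonneg_left (mul_nonneg hA (hE0 t)))
    | succ n ih =>
      intro t
      calc f t ≤ E t + θ t * (A * E (σ t) + c ^ n * max B 0) :=
            (hrec t).trans (add_le_add_right (mul_le_mul_of_nonneg_left (ih _) (hθ0 t)) _)
        _ = E t + A * (θ t * E (σ t)) + θ t * (c ^ n * max B 0) := by ring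
        _ ≤ E t + A * (c * E t) + c * (c ^ n * max B 0) := by
            gcongr E t + ?_ + ?_
            exacts [mul_le_mul_of_nonneg_left (hE t) hA,
              mul_le_mul_of_nonneg_right (hθc t) (by positivity)]
        _ = A * E t + c ^ (n + 1) * max B 0 := by linear_combination E t * hA_fix
  have hlim : Tendsto (fun n : ℕ => A * E t + c ^ n * max B 0) atTop (𝓝 (A * E t)) := by
    simpa using tendsto_const_nhds.add
      ((tendsto_pow_atTop_nhds_zero_of_lt_one hc0 hc).mul_const (max B 0))
  exact ge_of_tendsto' hlim fun n => hiter n t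

theorem mul_mul_rpow_mul_rpow_le {θ c C a a' b b' μ κ γ ζ : ℝ} (hθ : 0 ≤ θ) (hC : 0 ≤ C)
    (ha : 0 ≤ a) (ha' : 0 ≤ a') (hb : 0 ≤ b) (hb' : 0 ≤ b') (hμ : 0 ≤ μ) (hκ : 0 ≤ κ)
    (hγ : 0 ≤ γ) (hζ : 0 ≤ ζ) (haa' : a' ≤ μ * a) (hbb' : b' ≤ κ * b)
    (hc : κ ^ ζ * μ ^ γ * θ ≤ c) :
    θ * (C * a' ^ γ * b' ^ ζ) ≤ c * (C * a ^ γ * b ^ ζ) := by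
  have hγ_le : a' ^ γ ≤ μ ^ γ * a ^ γ := by
    rw [← Real.mul_rpow hμ ha]
    exact Real.rpow_le_rpow ha' haa' hγ
  have hζ_le : b' ^ ζ ≤ κ ^ ζ * b ^ ζ := by
    rw [← Real.mul_rpow hκ hb]
    exact Real.rpow_le_rpow hb' hbb' hζ
  calc θ * (C * a' ^ γ * b' ^ ζ) ≤ θ * (C * (μ ^ γ * a ^ γ) * (κ ^ ζ * b ^ ζ)) := by gcongr
    _ = (κ ^ ζ * μ ^ γ * θ) * (C * a ^ γ * b ^ ζ) := by ring
    _ ≤ c * (C * a ^ γ * b ^ ζ) := by gcongr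

theorem key_iteration_argument_general
    {M : Type*} (w : M → M) (X Y Z : M → Type*)
    [∀ m, MetricSpace (X m)] [∀ m, MetricSpace (Y m)] [∀ m, MetricSpace (Z m)]
    -- distinguished base points
    (i : ∀ m, Y m) (i₀ : ∀ m, Z m)
    (um : ∀ m, X m → X (w m)) (vm : ∀ m, X m × Y m → Y (w m))
    (g : ∀ m, X m × Y m → Z (w m))
    (μ κ θ : M → ℝ)
    (hμ0 : ∀ m, 0 ≤ μ m) (hκ0 : ∀ m, 0 ≤ κ m) (hθ0 : ∀ m, 0 ≤ θ m)
    (C₁ C₂ : ℝ) (hC₁ : 0 ≤ C₁) (hC₂ : 0 ≤ C₂)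
    (γ₁ γ₂ ζ₁ ζ₂ : ℝ)
    (hγ₁ : 0 ≤ γ₁) (hγ₂ : 0 ≤ γ₂)
    (hζ₁ : 0 ≤ ζ₁) (hζ₂ : 0 ≤ ζ₂)
    -- (i): u is Lipschitz and preserves the base points
    (huLip : ∀ m (a b : X m), dist (um m a) (um m b) ≤ μ m * dist a b)
    -- (ii)
    (hv : ∀ m (x : X m) (y : Y m),
      dist (vm m (x, y)) (i (w m)) ≤ κ m * dist y (i m))
    -- (iii): the recursive inequality
    (hrec : ∀ m (x₁ x₂ : X m) (y : Y m),
      dist (g m (x₁, y)) (g m (x₂, y)) ≤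
        C₁ * dist x₁ x₂ ^ γ₁ * dist y (i m) ^ ζ₁ +
        C₂ * dist x₁ x₂ ^ γ₂ * dist y (i m) ^ ζ₂ +
        θ m * dist (g (w m) (um m x₁, vm m (x₁, y)))
                   (g (w m) (um m x₂, vm m (x₁, y))))
    -- (iv): g is bounded
    (hgbdd : ∃ B : ℝ, ∀ m (x : X m) (y : Y m),
      dist (g m (x, y)) (i₀ (w m)) ≤ B)
    -- (v): spectral gap conditions
    (hθ : ∃ c : ℝ, c < 1 ∧ ∀ m, θ m ≤ c)
    (h1 : ∃ c : ℝ, c < 1 ∧ ∀ m, κ m ^ ζ₁ * μ m ^ γ₁ * θ m ≤ c)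
    (h2 : ∃ c : ℝ, c < 1 ∧ ∀ m, κ m ^ ζ₂ * μ m ^ γ₂ * θ m ≤ c) :
    ∃ C : ℝ, 0 ≤ C ∧ ∀ m (x₁ x₂ : X m) (y : Y m),
      dist (g m (x₁, y)) (g m (x₂, y)) ≤
        C * C₁ * dist x₁ x₂ ^ γ₁ * dist y (i m) ^ ζ₁ +
        C * C₂ * dist x₁ x₂ ^ γ₂ * dist y (i m) ^ ζ₂ := by
  obtain ⟨c₀, hc₀, hθc₀⟩ := hθ
  obtain ⟨c₁, hc₁, hc₁'⟩ := h1
  obtain ⟨c₂, hc₂, hc₂'⟩ := h2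
  obtain ⟨B, hB⟩ := hgbdd
  set c := max c₀ (max c₁ c₂)
  have hc : c < 1 := max_lt hc₀ (max_lt hc₁ hc₂)
  let σ : (Σ m, X m × X m × Y m) → Σ m, X m × X m × Y m :=
    fun t => ⟨w t.1, um t.1 t.2.1, um t.1 t.2.2.1, vm t.1 (t.2.1, t.2.2.2)⟩
  let f : (Σ m, X m × X m × Y m) → ℝ :=
    fun t => dist (g t.1 (t.2.1, t.2.2.2)) (g t.1 (t.2.2.1, t.2.2.2))
  let E : (Σ m, X m × X m × Y m) → ℝ := fun t =>
    C₁ * dist t.2.1 t.2.2.1 ^ γ₁ * dist t.2.2.2 (i t.1) ^ ζ₁ +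
      C₂ * dist t.2.1 t.2.2.1 ^ γ₂ * dist t.2.2.2 (i t.1) ^ ζ₂
  have hf : BddAbove (Set.range f) := ⟨B + B, by
    rintro _ ⟨t, rfl⟩
    exact (dist_triangle_right _ _ (i₀ (w t.1))).trans (add_le_add (hB _ _ _) (hB _ _ _))⟩
  have hE : ∀ t, θ t.1 * E (σ t) ≤ c * E t := by
    rintro ⟨m, x₁, x₂, y⟩
    have term := fun {C γ ζ c'} (hC : 0 ≤ C) (hγ : 0 ≤ γ) (hζ : 0 ≤ ζ) (hc' : c' ≤ c)
        (h : κ m ^ ζ * μ m ^ γ * θ m ≤ c') =>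
      mul_mul_rpow_mul_rpow_le (hθ0 m) hC dist_nonneg dist_nonneg dist_nonneg dist_nonneg
        (hμ0 m) (hκ0 m) hγ hζ (huLip m x₁ x₂) (hv m x₁ y) (h.trans hc')
    simp only [E, σ, mul_add]
    exact add_le_add (term hC₁ hγ₁ hζ₁ (le_max_of_le_right (le_max_left _ _)) (hc₁' m))
      (term hC₂ hγ₂ hζ₂ (le_max_of_le_right (le_max_right _ _)) (hc₂' m))
  refine ⟨(1 - c)⁻¹, inv_nonneg.2 (sub_nonneg.2 hc.le), fun m x₁ x₂ y => ?_⟩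
  have key := le_inv_one_sub_mul_of_le_add_mul_comp σ f E (fun t => θ t.1) hc
    (fun t => hθ0 t.1) (fun t => (hθc₀ t.1).trans (le_max_left _ _))
    (fun t => by positivity) hf (fun t => hrec t.1 t.2.1 t.2.2.1 t.2.2.2) hE ⟨m, x₁, x₂, y⟩
  linarith

/-- Key iteration argument for Hölder/Lipschitz regularity
(bounded case, Lipschitz exponent). -/
theorem key_iteration_argument
    {M : Type*} (w : M → M) (X Y Z : M → Type*)
    [∀ m, MetricSpace (X m)] [∀ m, MetricSpace (Y m)] [∀ m, MetricSpace (Z m)]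
    -- distinguished base points
    (j : ∀ m, X m) (i : ∀ m, Y m) (i₀ : ∀ m, Z m)
    (um : ∀ m, X m → X (w m)) (vm : ∀ m, X m × Y m → Y (w m))
    (g : ∀ m, X m × Y m → Z (w m))
    (μ κ θ : M → ℝ)
    (hμ0 : ∀ m, 0 ≤ μ m) (hκ0 : ∀ m, 0 ≤ κ m) (hθ0 : ∀ m, 0 ≤ θ m)
    (C₁ C₂ : ℝ) (hC₁ : 0 ≤ C₁) (hC₂ : 0 ≤ C₂)
    (γ₁ γ₂ ζ₁ ζ₂ : ℝ)
    (hγ₁ : 0 ≤ γ₁) (hγ₁' : γ₁ ≤ 1) (hγ₂ : 0 ≤ γ₂) (hγ₂' : γ₂ ≤ 1)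
    (hζ₁ : 0 ≤ ζ₁) (hζ₁' : ζ₁ ≤ 1) (hζ₂ : 0 ≤ ζ₂) (hζ₂' : ζ₂ ≤ 1)
    -- μ, κ, θ are bounded functions
    (hbdd : ∃ C : ℝ, ∀ m, μ m ≤ C ∧ κ m ≤ C ∧ θ m ≤ C)
    -- (i): u is Lipschitz and preserves the base points
    (huLip : ∀ m (a b : X m), dist (um m a) (um m b) ≤ μ m * dist a b)
    (huj : ∀ m, um m (j m) = j (w m))
    -- (ii)
    (hv : ∀ m (x : X m) (y : Y m),
      dist (vm m (x, y)) (i (w m)) ≤ κ m * dist y (i m))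
    -- (iii): the recursive inequality
    (hrec : ∀ m (x₁ x₂ : X m) (y : Y m),
      dist (g m (x₁, y)) (g m (x₂, y)) ≤
        C₁ * dist x₁ x₂ ^ γ₁ * dist y (i m) ^ ζ₁ +
        C₂ * dist x₁ x₂ ^ γ₂ * dist y (i m) ^ ζ₂ +
        θ m * dist (g (w m) (um m x₁, vm m (x₁, y)))
                   (g (w m) (um m x₂, vm m (x₁, y))))
    -- (iv): g is bounded
    (hgbdd : ∃ B : ℝ, ∀ m (x : X m) (y : Y m),
      dist (g m (x, y)) (i₀ (w m)) ≤ B)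
    -- (v): spectral gap conditions
    (hθ : ∃ c : ℝ, c < 1 ∧ ∀ m, θ m ≤ c)
    (h1 : ∃ c : ℝ, c < 1 ∧ ∀ m, κ m ^ ζ₁ * μ m ^ γ₁ * θ m ≤ c)
    (h2 : ∃ c : ℝ, c < 1 ∧ ∀ m, κ m ^ ζ₂ * μ m ^ γ₂ * θ m ≤ c) :
    ∃ C : ℝ, 0 ≤ C ∧ ∀ m (x₁ x₂ : X m) (y : Y m),
      dist (g m (x₁, y)) (g m (x₂, y)) ≤
        C * C₁ * dist x₁ x₂ ^ γ₁ * dist y (i m) ^ ζ₁ +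
        C * C₂ * dist x₁ x₂ ^ γ₂ * dist y (i m) ^ ζ₂ :=
  key_iteration_argument_general w X Y Z i i₀ um vm g μ κ θ hμ0 hκ0 hθ0 C₁ C₂ hC₁ hC₂ γ₁ γ₂ ζ₁ ζ₂
    hγ₁ hγ₂ hζ₁ hζ₂ huLip hv hrec hgbdd hθ h1 h2
end

section
/- Differentiability of the fixed point of a parameter-dependent map under minimal hypotheses. Let E be a Banach space and F a normed space, let X ⊆ E and Y ⊆ F be open sets, let G : X × Y → X, let y₀ ∈ Y, and let x : Y → X be a map such that G(x(y), y) = x(y) for all y in some neighborhood of y₀. Assume that x is continuous at y₀, that G is Fréchet differentiable at the point (x(y₀), y₀), and that ‖D₁G(x(y₀), y₀)‖ < 1. Then the operator I − D₁G(x(y₀), y₀) is invertible with bounded inverse, x is Fréchet differentiable at y₀, and Dx(y₀) = (I − D₁G(x(y₀), y₀))⁻¹ ∘ D₂G(x(y₀), y₀). -/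
/-!
Put `Φ (u, v) = (u - G (u, v), v)`. The fixed-point equation says that `Φ` sends the graph map
`y ↦ (x y, y)` to `y ↦ (0, y)`, and the derivative of `Φ` is the block-triangular operator
`(u, v) ↦ ((1 - A) u - C v, v)` with `A = D₁G`, `C = D₂G`. A left inverse `B` of `1 - A` yields the
left inverse `(a, b) ↦ (B (a + C b), b)` of `DΦ`, so the easy half of the inverse function theorem
(`HasFDerivAt.of_comp_of_leftInverse`, which needs only continuity of the graph map) differentiates
the graph map. When `‖A‖ < 1`, the Neumann series inverts `1 - A`.
-/

open Topology ContinuousLinearMap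

section FixedPoint

variable {𝕜 E F : Type*} [NontriviallyNormedField 𝕜]
  [NormedAddCommGroup E] [NormedSpace 𝕜 E] [NormedAddCommGroup F] [NormedSpace 𝕜 F]

theorem ContinuousLinearMap.leftInverse_prod_fst_sub
    (L : E × F →L[𝕜] E) {B : E →L[𝕜] E} (hB : B * (1 - L ∘L inl 𝕜 E F) = 1) :
    Function.LeftInverse ((B ∘L (fst 𝕜 E F + L ∘L inr 𝕜 E F ∘L snd 𝕜 E F)).prod (snd 𝕜 E F))
      ((fst 𝕜 E F - L).prod (snd 𝕜 E F)) := by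
  rintro ⟨u, v⟩
  have hBu : B (u - L (u, 0)) = u := by simpa using congr($hB u)
  have hL : L (u, v) = L (u, 0) + L (0, v) := by rw [← map_add, Prod.mk_add_mk, add_zero, zero_add]
  refine Prod.ext ?_ rfl
  change B (u - L (u, v) + L (0, v)) = u
  rwa [hL, sub_add_eq_sub_sub, sub_add_cancel]

theorem HasFDerivAt.of_eventually_fixedPoint {G : E × F → E} {G' : E × F →L[𝕜] E}
    {x : F → E} {y₀ : F} {B : E →L[𝕜] E} (hG : HasFDerivAt G G' (x y₀, y₀))
    (hx : ContinuousAt x y₀) (hfix : ∀ᶠ y in 𝓝 y₀, G (x y, y) = x y)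
    (hB : B * (1 - G' ∘L inl 𝕜 E F) = 1) :
    HasFDerivAt x (B ∘L G' ∘L inr 𝕜 E F) y₀ := by
  have hΦ : HasFDerivAt (fun p : E × F => (p.1 - G p, p.2))
      ((fst 𝕜 E F - G').prod (snd 𝕜 E F)) (x y₀, y₀) :=
    (hasFDerivAt_fst.sub hG).prodMk hasFDerivAt_snd
  have hcomp : (fun p : E × F => (p.1 - G p, p.2)) ∘ (fun y => (x y, y))
      =ᶠ[𝓝 y₀] fun y => ((0 : E), y) := by
    filter_upwards [hfix] with y hy
    simp [hy]
  have hgraph := hΦ.of_comp_of_leftInverse (hx.prodMk continuousAt_id)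
    ((hasFDerivAt_const 0 y₀).prodMk (hasFDerivAt_id y₀)) hcomp (G'.leftInverse_prod_fst_sub hB)
  refine (hasFDerivAt_fst.comp y₀ hgraph).congr_fderiv ?_
  ext y
  simp

end FixedPoint

theorem fixed_point_differentiability_general
    {E F : Type*}
    [NormedAddCommGroup E] [NormedSpace ℝ E] [CompleteSpace E]
    [NormedAddCommGroup F] [NormedSpace ℝ F]
    (G : E × F → E)
    (y₀ : F)
    (x : F → E)
    -- fixed-point equation in a neighborhood of y₀
    (hfix : ∀ᶠ y in nhds y₀, G (x y, y) = x y)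
    (hxcont : ContinuousAt x y₀)
    -- G is Fréchet differentiable at (x y₀, y₀)
    (G' : E × F →L[ℝ] E) (hG' : HasFDerivAt G G' (x y₀, y₀))
    (hnorm : ‖G'.comp (ContinuousLinearMap.inl ℝ E F)‖ < 1) :
    ∃ B : E →L[ℝ] E,
      B * (1 - G'.comp (ContinuousLinearMap.inl ℝ E F)) = 1 ∧
      (1 - G'.comp (ContinuousLinearMap.inl ℝ E F)) * B = 1 ∧
      HasFDerivAt x (B.comp (G'.comp (ContinuousLinearMap.inr ℝ E F))) y₀ := by
  let U := Units.oneSub _ hnorm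
  exact ⟨↑U⁻¹, U.inv_mul, U.mul_inv, hG'.of_eventually_fixedPoint hxcont hfix U.inv_mul⟩

/-- Differentiability of the fixed point of a parameter-dependent map under
minimal hypotheses. -/
theorem fixed_point_differentiability
    {E F : Type*}
    [NormedAddCommGroup E] [NormedSpace ℝ E] [CompleteSpace E]
    [NormedAddCommGroup F] [NormedSpace ℝ F]
    (X : Set E) (Y : Set F) (hX : IsOpen X) (hY : IsOpen Y)
    (G : E × F → E) (hGmap : ∀ p ∈ X ×ˢ Y, G p ∈ X)
    (y₀ : F) (hy₀ : y₀ ∈ Y)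
    (x : F → E) (hxmem : ∀ y ∈ Y, x y ∈ X)
    -- fixed-point equation in a neighborhood of y₀
    (hfix : ∀ᶠ y in nhds y₀, G (x y, y) = x y)
    (hxcont : ContinuousAt x y₀)
    -- G is Fréchet differentiable at (x y₀, y₀)
    (G' : E × F →L[ℝ] E) (hG' : HasFDerivAt G G' (x y₀, y₀))
    (hnorm : ‖G'.comp (ContinuousLinearMap.inl ℝ E F)‖ < 1) :
    ∃ B : E →L[ℝ] E,
      B * (1 - G'.comp (ContinuousLinearMap.inl ℝ E F)) = 1 ∧
      (1 - G'.comp (ContinuousLinearMap.inl ℝ E F)) * B = 1 ∧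
      HasFDerivAt x (B.comp (G'.comp (ContinuousLinearMap.inr ℝ E F))) y₀ :=
  fixed_point_differentiability_general G y₀ x hfix hxcont G' hG' hnorm
end
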